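/- arXiv:2211.10837 — 10 statements merged into one kernel-verified Lean document; each statement's English description precedes it below -/
import Mathlib

section
/- Let P ≥ 2 be an integer and let s_1, …, s_{P−1} ∈ (0,1). Suppose real numbers u⁺_1,…,u⁺_P and u⁻_1,…,u⁻_P satisfy the recurrences u⁺_p = s_p·(u⁻_p + 1) + (1 − s_p)·(u⁺_{p+1} + 1) for 1 ≤ p ≤ P−1 and u⁻_p = s_{p−1}·(u⁺_p + 1) + (1 − s_{p−1})·(u⁻_{p−1} + 1) for 2 ≤ p ≤ P, together with the boundary conditions u⁻_1 = u⁺_1 + 1 and u⁺_P = 1. Then u⁺_1 = P + 2·Σ_{p=1}^{P−1} p·s_p/(1 − s_p). -/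
/-- Forward half of the round trip time computation for the generalized DEO
parallel tempering scheme: `u⁺ p` (resp. `u⁻ p`) is the expected number of
windows for an upward-moving (resp. downward-moving) particle at chain `p` to
reach the top chain `P`, and `s p` is the per-window rejection probability. -/
theorem deo_forward_hitting_time (P : ℕ) (hP : 2 ≤ P)
    (s uup udown : ℕ → ℝ)
    (hs : ∀ p, 1 ≤ p → p ≤ P - 1 → s p ∈ Set.Ioo (0 : ℝ) 1)
    (hrec_up : ∀ p, 1 ≤ p → p ≤ P - 1 →
      uup p = s p * (udown p + 1) + (1 - s p) * (uup (p + 1) + 1))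
    (hrec_down : ∀ p, 2 ≤ p → p ≤ P →
      udown p = s (p - 1) * (uup p + 1) + (1 - s (p - 1)) * (udown (p - 1) + 1))
    (hbd1 : udown 1 = uup 1 + 1)
    (hbd2 : uup P = 1) :
    uup 1 = P + 2 * ∑ p ∈ Finset.Icc 1 (P - 1), (p : ℝ) * s p / (1 - s p) := by
  -- Key lemma: (1 - s p) * (udown p - uup (p+1)) = 2 p for 1 ≤ p ≤ P-1
  have key : ∀ p, 1 ≤ p → p ≤ P - 1 →
      (1 - s p) * (udown p - uup (p + 1)) = 2 * p := by
    intro p hp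
    induction p, hp using Nat.le_induction with
    | base =>
      intro h1
      have h := hrec_up 1 le_rfl h1
      push_cast
      linear_combination h + hbd1
    | succ p hp ih =>
      intro hp1
      have hple : p ≤ P - 1 := by omega
      have IH := ih hple
      have hd := hrec_down (p + 1) (by omega) (by omega)
      have hu := hrec_up (p + 1) (by omega) hp1
      simp only [Nat.add_sub_cancel] at hd
      push_cast
      linear_combination IH + hd + hu
  -- Main induction: uup (P - k) = k + 1 + 2 * Σ_{q=P-k}^{P-1} q s_q/(1-s_q)
  have main : ∀ k, k ≤ P - 1 →
      uup (P - k) = (k + 1 : ℝ) +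
        2 * ∑ q ∈ Finset.Icc (P - k) (P - 1), (q : ℝ) * s q / (1 - s q) := by
    intro k
    induction k with
    | zero =>
      intro _
      simp only [Nat.sub_zero, hbd2]
      rw [Finset.Icc_eq_empty (by omega)]
      norm_num
    | succ k ih =>
      intro hk
      have ihv := ih (by omega)
      set p := P - (k + 1) with hpdef
      have hp1 : 1 ≤ p := by omega
      have hpP : p ≤ P - 1 := by omega
      have hps : p + 1 = P - k := by omega
      have hskey := key p hp1 hpP
      have hsIoo := hs p hp1 hpP
      have hne : (1 : ℝ) - s p ≠ 0 := by
        have := hsIoo.2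
        intro h; linarith
      have hx : udown p - uup (p + 1) = 2 * p / (1 - s p) := by
        field_simp
        linarith [hskey]
      have hu := hrec_up p hp1 hpP
      have hIcc : Finset.Icc p (P - 1) = insert p (Finset.Icc (p + 1) (P - 1)) := by
        ext x
        simp only [Finset.mem_Icc, Finset.mem_insert]
        omega
      rw [← hps] at ihv
      rw [hIcc, Finset.sum_insert (by simp)]
      have : uup p = 1 + uup (p + 1) + s p * (udown p - uup (p + 1)) := by
        linear_combination hu
      rw [this, hx, ihv]
      push_cast
      field_simp
      ring
  have h1 := main (P - 1) (le_rfl)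
  have hP1 : P - (P - 1) = 1 := by omega
  rw [hP1] at h1
  rw [h1]
  have : ((P - 1 : ℕ) : ℝ) = (P : ℝ) - 1 := by
    push_cast [Nat.cast_sub (by omega : 1 ≤ P)]; ring
  rw [this]
  ring
end

section
/- Let P ≥ 2 be an integer and let s_1, …, s_{P−1} ∈ (0,1). Suppose real numbers v⁺_1,…,v⁺_P and v⁻_1,…,v⁻_P satisfy the recurrences v⁺_p = s_p·(v⁻_p + 1) + (1 − s_p)·(v⁺_{p+1} + 1) for 1 ≤ p ≤ P−1 and v⁻_p = s_{p−1}·(v⁺_p + 1) + (1 − s_{p−1})·(v⁻_{p−1} + 1) for 2 ≤ p ≤ P, together with the boundary conditions v⁺_P = v⁻_P + 1 and v⁻_1 = 1. Then v⁻_P = P + 2·Σ_{p=1}^{P−1} (P − p)·s_p/(1 − s_p). -/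
/-!
Adding the two one-window equations between chains `p` and `p + 1` shows that the gap
`v⁺ p - v⁻ p` drops by exactly `2` from one chain to the next, so the top boundary condition
pins it down as `2 (P - p) + 1`. Substituting this gap into the equation for `v⁺ p` gives the
increment `v⁻ (p + 1) - v⁻ p = 1 + 2 (P - p) s_p / (1 - s_p)`, and telescoping from `v⁻ 1 = 1`
yields the formula.
-/

open Finset

theorem eq_add_nsmul_of_forall_eq_succ_add {M : Type*} [AddCommGroup M] {f : ℕ → M} {c : M}
    {m n : ℕ} (hmn : m ≤ n) (h : ∀ q ∈ Ico m n, f q = f (q + 1) + c) :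
    f m = f n + (n - m) • c := by
  have hsum : ∑ q ∈ Ico m n, (f (q + 1) - f q) = ∑ q ∈ Ico m n, -c :=
    sum_congr rfl fun q hq => by rw [h q hq]; abel
  rw [sum_Ico_sub f hmn, sum_const, Nat.card_Ico, smul_neg] at hsum
  rw [← sub_eq_iff_eq_add', ← neg_sub, hsum, neg_neg]

section OneWindow

variable {r a b a' b' : ℝ}

theorem sub_eq_sub_add_two_of_window (hup : a = r * (b + 1) + (1 - r) * (a' + 1))
    (hdown : b' = r * (a' + 1) + (1 - r) * (b + 1)) : a - b = a' - b' + 2 := by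
  linear_combination hup + hdown

theorem sub_eq_one_add_of_window (hup : a = r * (b + 1) + (1 - r) * (a' + 1))
    (hdown : b' = r * (a' + 1) + (1 - r) * (b + 1)) (hr : r ≠ 1) :
    b' - b = 1 + (a - b - 1) * r / (1 - r) := by
  have hr' : 1 - r ≠ 0 := sub_ne_zero.mpr hr.symm
  rw [← sub_eq_iff_eq_add', eq_div_iff hr']
  linear_combination (1 - r) * hdown - r * hup

end OneWindow

/-- Backward half of the round trip time computation for the generalized DEO
parallel tempering scheme: `v⁺ p` (resp. `v⁻ p`) is the expected number of
windows for an upward-moving (resp. downward-moving) particle at chain `p` to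
reach the bottom chain `1`, and `s p` is the per-window rejection probability. -/
theorem deo_backward_hitting_time (P : ℕ) (hP : 2 ≤ P)
    (s vup vdown : ℕ → ℝ)
    (hs : ∀ p, 1 ≤ p → p ≤ P - 1 → s p ∈ Set.Ioo (0 : ℝ) 1)
    (hrec_up : ∀ p, 1 ≤ p → p ≤ P - 1 →
      vup p = s p * (vdown p + 1) + (1 - s p) * (vup (p + 1) + 1))
    (hrec_down : ∀ p, 2 ≤ p → p ≤ P →
      vdown p = s (p - 1) * (vup p + 1) + (1 - s (p - 1)) * (vdown (p - 1) + 1))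
    (hbd1 : vup P = vdown P + 1)
    (hbd2 : vdown 1 = 1) :
    vdown P = P + 2 * ∑ p ∈ Finset.Icc 1 (P - 1), ((P : ℝ) - p) * s p / (1 - s p) := by
  have hdown : ∀ p, 1 ≤ p → p ≤ P - 1 →
      vdown (p + 1) = s p * (vup (p + 1) + 1) + (1 - s p) * (vdown p + 1) := fun p h1 h2 => by
    simpa using hrec_down (p + 1) (by omega) (by omega)
  have hgap : ∀ p, 1 ≤ p → p ≤ P → vup p - vdown p = 2 * ((P : ℝ) - p) + 1 := by
    intro p h1 h2
    have := eq_add_nsmul_of_forall_eq_succ_add (f := fun q => vup q - vdown q) (c := 2) h2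
      fun q hq => sub_eq_sub_add_two_of_window (hrec_up q (by grind) (by grind))
        (hdown q (by grind) (by grind))
    rw [this, hbd1, nsmul_eq_mul, Nat.cast_sub h2]
    ring
  have hinc : ∀ p ∈ Icc 1 (P - 1),
      vdown (p + 1) - vdown p = 1 + 2 * (((P : ℝ) - p) * s p / (1 - s p)) := by
    intro p hp
    obtain ⟨h1, h2⟩ := mem_Icc.mp hp
    rw [sub_eq_one_add_of_window (hrec_up p h1 h2) (hdown p h1 h2) (hs p h1 h2).2.ne,
      hgap p h1 (by omega)]
    ring
  calc vdown P = vdown 1 + ∑ p ∈ Icc 1 (P - 1), (vdown (p + 1) - vdown p) := by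
        rw [sum_Icc_sub (by omega), Nat.sub_add_cancel (by omega)]
        ring
    _ = P + 2 * ∑ p ∈ Icc 1 (P - 1), ((P : ℝ) - p) * s p / (1 - s p) := by
        rw [sum_congr rfl hinc, sum_add_distrib, sum_const, Nat.card_Icc, Nat.add_sub_cancel, ← mul_sum, hbd2,
          nsmul_eq_mul, Nat.cast_sub (show 1 ≤ P by omega)]
        push_cast
        ring
end

section
/- Let P ≥ 2 and W ≥ 1 be integers and let r_1, …, r_{P−1} ∈ (0,1). Set s_p = r_p^W. Suppose u⁺_p, u⁻_p (1 ≤ p ≤ P) satisfy u⁺_p = s_p·(u⁻_p + 1) + (1 − s_p)·(u⁺_{p+1} + 1) for 1 ≤ p ≤ P−1, u⁻_p = s_{p−1}·(u⁺_p + 1) + (1 − s_{p−1})·(u⁻_{p−1} + 1) for 2 ≤ p ≤ P, u⁻_1 = u⁺_1 + 1 and u⁺_P = 1; and suppose v⁺_p, v⁻_p satisfy the same two recurrences with boundary conditions v⁺_P = v⁻_P + 1 and v⁻_1 = 1. Then the expected round trip time satisfies W·(u⁺_1 + v⁻_P) = 2WP + 2WP·Σ_{p=1}^{P−1} r_p^W/(1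 − r_p^W). -/
/-- Lemma 1 of the paper: expected round trip time of the generalized DEO scheme
with `P` chains, window size `W` and per-attempt rejection rates `r p`, where the
per-window rejection probability between chains `p` and `p+1` is `r p ^ W`. -/
theorem deo_round_trip_time (P W : ℕ) (hP : 2 ≤ P) (hW : 1 ≤ W)
    (r : ℕ → ℝ)
    (hr : ∀ p, 1 ≤ p → p ≤ P - 1 → r p ∈ Set.Ioo (0 : ℝ) 1)
    (uup udown vup vdown : ℕ → ℝ)
    (hurec_up : ∀ p, 1 ≤ p → p ≤ P - 1 →
      uup p = r p ^ W * (udown p + 1) + (1 - r p ^ W) * (uup (p + 1) + 1))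
    (hurec_down : ∀ p, 2 ≤ p → p ≤ P →
      udown p = r (p - 1) ^ W * (uup p + 1) + (1 - r (p - 1) ^ W) * (udown (p - 1) + 1))
    (hubd1 : udown 1 = uup 1 + 1)
    (hubd2 : uup P = 1)
    (hvrec_up : ∀ p, 1 ≤ p → p ≤ P - 1 →
      vup p = r p ^ W * (vdown p + 1) + (1 - r p ^ W) * (vup (p + 1) + 1))
    (hvrec_down : ∀ p, 2 ≤ p → p ≤ P →
      vdown p = r (p - 1) ^ W * (vup p + 1) + (1 - r (p - 1) ^ W) * (vdown (p - 1) + 1))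
    (hvbd1 : vup P = vdown P + 1)
    (hvbd2 : vdown 1 = 1) :
    (W : ℝ) * (uup 1 + vdown P) =
      2 * W * P + 2 * W * P * ∑ p ∈ Finset.Icc 1 (P - 1), r p ^ W / (1 - r p ^ W) := by
  have hs : ∀ p, 1 ≤ p → p ≤ P - 1 → 0 < r p ^ W ∧ r p ^ W < 1 := by
    intro p h1 h2
    obtain ⟨ha, hb⟩ := hr p h1 h2
    exact ⟨pow_pos ha W, pow_lt_one₀ ha.le hb (by omega)⟩
  -- generic "difference" telescoping identity
  have add_id : ∀ (a b : ℕ → ℝ),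
      (∀ p, 1 ≤ p → p ≤ P - 1 →
        a p = r p ^ W * (b p + 1) + (1 - r p ^ W) * (a (p + 1) + 1)) →
      (∀ p, 2 ≤ p → p ≤ P →
        b p = r (p - 1) ^ W * (a p + 1) + (1 - r (p - 1) ^ W) * (b (p - 1) + 1)) →
      ∀ p q, 1 ≤ p → p ≤ q → q ≤ P →
        a p - b p = a q - b q + 2 * ((q : ℝ) - (p : ℝ)) := by
    intro a b hup hdown
    have step : ∀ p, 1 ≤ p → p ≤ P - 1 → a p - b p = a (p + 1) - b (p + 1) + 2 := by
      intro p h1 h2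
      have e1 := hup p h1 h2
      have e2 := hdown (p + 1) (by omega) (by omega)
      simp only [Nat.add_sub_cancel] at e2
      linear_combination e1 + e2
    intro p q h1 hpq hqP
    induction q, hpq using Nat.le_induction with
    | base => ring
    | succ q hq ih =>
      have h := step q (by omega) (by omega)
      have h2 := ih (by omega)
      push_cast
      push_cast at h2
      linarith
  have hDu : ∀ q, 1 ≤ q → q ≤ P → uup q - udown q = 1 - 2 * (q : ℝ) := by
    intro q h1 h2
    have h := add_id uup udown hurec_up hurec_down 1 q le_rfl h1 h2
    rw [hubd1] at h
    push_cast at h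
    linarith
  have hDv : ∀ p, 1 ≤ p → p ≤ P → vup p - vdown p = 1 + 2 * ((P : ℝ) - (p : ℝ)) := by
    intro p h1 h2
    have h := add_id vup vdown hvrec_up hvrec_down p P h1 h2 le_rfl
    rw [hvbd1] at h
    linarith
  have hCu : ∀ p, 1 ≤ p → p ≤ P - 1 →
      (1 - r p ^ W) * (udown p - uup (p + 1)) = 2 * (p : ℝ) := by
    intro p h1 h2
    have e1 := hurec_up p h1 h2
    have e2 := hurec_down (p + 1) (by omega) (by omega)
    simp only [Nat.add_sub_cancel] at e2
    have d1 := hDu p h1 (by omega)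
    have d2 := hDu (p + 1) (by omega) (by omega)
    push_cast at d2
    linear_combination (e1 - e2 - d1 - d2) / 2
  have hCv : ∀ p, 1 ≤ p → p ≤ P - 1 →
      (1 - r p ^ W) * (vdown p - vup (p + 1)) = -2 * ((P : ℝ) - (p : ℝ)) := by
    intro p h1 h2
    have e1 := hvrec_up p h1 h2
    have e2 := hvrec_down (p + 1) (by omega) (by omega)
    simp only [Nat.add_sub_cancel] at e2
    have d1 := hDv p h1 (by omega)
    have d2 := hDv (p + 1) (by omega) (by omega)
    push_cast at d2
    linear_combination (e1 - e2 - d1 - d2) / 2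
  have hterm : ∀ p, 1 ≤ p → p ≤ P - 1 →
      (uup p - uup (p + 1)) + (vdown (p + 1) - vdown p)
        = 2 + 2 * (P : ℝ) * (r p ^ W / (1 - r p ^ W)) := by
    intro p h1 h2
    obtain ⟨hs0, hs1⟩ := hs p h1 h2
    have hne : (1 : ℝ) - r p ^ W ≠ 0 := by linarith
    have d1 := hDu p h1 (by omega)
    have d2 := hDv (p + 1) (by omega) (by omega)
    push_cast at d2
    have c1 := hCu p h1 h2
    have c2 := hCv p h1 h2
    field_simp
    linear_combination (1 - r p ^ W) * d1 + c1 - (1 - r p ^ W) * d2 - c2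
  -- telescoping sums
  have hIcc : Finset.Icc 1 (P - 1) = Finset.Ico 1 P := by
    rw [← Finset.Ico_add_one_right_eq_Icc]
    congr 1
    omega
  have tel1 : ∑ p ∈ Finset.Icc 1 (P - 1), (uup p - uup (p + 1)) = uup 1 - uup P := by
    rw [hIcc, Finset.sum_Ico_eq_sum_range]
    have h2 := Finset.sum_range_sub' (fun i => uup (1 + i)) (P - 1)
    have h3 : 1 + (P - 1) = P := by omega
    rw [h3] at h2
    exact h2
  have tel2 : ∑ p ∈ Finset.Icc 1 (P - 1), (vdown (p + 1) - vdown p) = vdown P - vdown 1 := by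
    rw [hIcc, Finset.sum_Ico_eq_sum_range]
    have h2 := Finset.sum_range_sub (fun i => vdown (1 + i)) (P - 1)
    have h3 : 1 + (P - 1) = P := by omega
    rw [h3] at h2
    exact h2
  have hsum : ∑ p ∈ Finset.Icc 1 (P - 1),
        ((uup p - uup (p + 1)) + (vdown (p + 1) - vdown p))
      = 2 * ((P : ℝ) - 1)
        + 2 * (P : ℝ) * ∑ p ∈ Finset.Icc 1 (P - 1), r p ^ W / (1 - r p ^ W) := by
    have hc : ∀ p ∈ Finset.Icc 1 (P - 1),
        (uup p - uup (p + 1)) + (vdown (p + 1) - vdown p)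
          = 2 + 2 * (P : ℝ) * (r p ^ W / (1 - r p ^ W)) := by
      intro p hp
      simp only [Finset.mem_Icc] at hp
      exact hterm p hp.1 hp.2
    rw [Finset.sum_congr rfl hc, Finset.sum_add_distrib, Finset.sum_const,
      Nat.card_Icc, ← Finset.mul_sum]
    have h : P - 1 + 1 - 1 = P - 1 := by omega
    rw [h, nsmul_eq_mul]
    have h2 : ((P - 1 : ℕ) : ℝ) = (P : ℝ) - 1 := by
      have : 1 ≤ P := by omega
      push_cast [this]
      ring
    rw [h2]
    ring
  have hsplit : ∑ p ∈ Finset.Icc 1 (P - 1),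
        ((uup p - uup (p + 1)) + (vdown (p + 1) - vdown p))
      = (uup 1 - uup P) + (vdown P - vdown 1) := by
    rw [Finset.sum_add_distrib, tel1, tel2]
  have final : uup 1 + vdown P
      = 2 * (P : ℝ) + 2 * (P : ℝ) * ∑ p ∈ Finset.Icc 1 (P - 1), r p ^ W / (1 - r p ^ W) := by
    rw [hsplit] at hsum
    rw [hubd2, hvbd2] at hsum
    linarith
  rw [final]
  ring
end

section
/- Let P ≥ 2 be an integer and let s_1, …, s_{P−1} ∈ (0,1). Suppose u⁺_p, u⁻_p (1 ≤ p ≤ P) satisfy u⁺_p = s_p·(u⁻_p + 1) + (1 − s_p)·(u⁺_{p+1} + 1) for 1 ≤ p ≤ P−1, u⁻_p = s_{p−1}·(u⁺_p + 1) + (1 − s_{p−1})·(u⁻_{p−1} + 1) for 2 ≤ p ≤ P, and u⁻_1 = u⁺_1 + 1. Define a_p = (1 − s_{p−1})·(u⁺_p − u⁻_{p−1}) for 2 ≤ p ≤ P. Then a_{p+1} − a_p = −2 for 2 ≤ p ≤ P−1, a_2 = −2, and consequently a_p = −2(p − 1) for all 2 ≤ p ≤ P. -/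
/-- Intermediate telescoping identity in the proof of Lemma 1 of the paper
(forward direction): with `a p = (1 - s (p-1)) * (u⁺ p - u⁻ (p-1))`, one has
`a (p+1) - a p = -2`, `a 2 = -2`, and hence `a p = -2 (p - 1)`. -/
theorem deo_forward_telescoping (P : ℕ) (hP : 2 ≤ P)
    (s uup udown : ℕ → ℝ)
    (hs : ∀ p, 1 ≤ p → p ≤ P - 1 → s p ∈ Set.Ioo (0 : ℝ) 1)
    (hrec_up : ∀ p, 1 ≤ p → p ≤ P - 1 →
      uup p = s p * (udown p + 1) + (1 - s p) * (uup (p + 1) + 1))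
    (hrec_down : ∀ p, 2 ≤ p → p ≤ P →
      udown p = s (p - 1) * (uup p + 1) + (1 - s (p - 1)) * (udown (p - 1) + 1))
    (hbd : udown 1 = uup 1 + 1) :
    let a : ℕ → ℝ := fun p => (1 - s (p - 1)) * (uup p - udown (p - 1))
    (∀ p, 2 ≤ p → p ≤ P - 1 → a (p + 1) - a p = -2) ∧
      a 2 = -2 ∧
      (∀ p, 2 ≤ p → p ≤ P → a p = -2 * ((p : ℝ) - 1)) := by
  intro a
  have hstep : ∀ p, 2 ≤ p → p ≤ P - 1 → a (p + 1) - a p = -2 := by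
    intro p hp2 hpP
    have h1 := hrec_up p (by omega) hpP
    have h2 := hrec_down p hp2 (by omega)
    show (1 - s (p + 1 - 1)) * (uup (p + 1) - udown (p + 1 - 1))
        - (1 - s (p - 1)) * (uup p - udown (p - 1)) = -2
    rw [Nat.add_sub_cancel]
    linear_combination -h1 - h2
  have ha2 : a 2 = -2 := by
    have h1 := hrec_up 1 le_rfl (by omega)
    show (1 - s (2 - 1)) * (uup 2 - udown (2 - 1)) = -2
    norm_num
    linear_combination -h1 - hbd
  refine ⟨hstep, ha2, ?_⟩
  intro p
  induction p with
  | zero => omega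
  | succ n ih =>
    intro h2 hP'
    rcases Nat.lt_or_ge n 2 with hn | hn
    · have : n = 1 := by omega
      subst this
      rw [ha2]; norm_num
    · have hih := ih hn (by omega)
      have hst := hstep n hn (by omega)
      have : a (n + 1) = a n - 2 := by linarith
      rw [this, hih]
      push_cast
      ring
end

section
/- Let P ≥ 2 be an integer and let s_1, …, s_{P−1} ∈ (0,1). Suppose v⁺_p, v⁻_p (1 ≤ p ≤ P) satisfy v⁺_p = s_p·(v⁻_p + 1) + (1 − s_p)·(v⁺_{p+1} + 1) for 1 ≤ p ≤ P−1, v⁻_p = s_{p−1}·(v⁺_p + 1) + (1 − s_{p−1})·(v⁻_{p−1} + 1) for 2 ≤ p ≤ P, and v⁺_P = v⁻_P + 1. Define b_p = (1 − s_{p−1})·(v⁺_p − v⁻_{p−1}) for 2 ≤ p ≤ P. Then b_{p+1} − b_p = −2 for 2 ≤ p ≤ P−1, b_P = 2, and consequently b_p = 2(P − p + 1) for all 2 ≤ p ≤ P. -/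
/-- Intermediate telescoping identity in the proof of Lemma 1 of the paper
(backward direction): with `b p = (1 - s (p-1)) * (v⁺ p - v⁻ (p-1))`, one has
`b (p+1) - b p = -2`, `b P = 2`, and hence `b p = 2 (P - p + 1)`. -/
theorem deo_backward_telescoping (P : ℕ) (hP : 2 ≤ P)
    (s vup vdown : ℕ → ℝ)
    (hs : ∀ p, 1 ≤ p → p ≤ P - 1 → s p ∈ Set.Ioo (0 : ℝ) 1)
    (hrec_up : ∀ p, 1 ≤ p → p ≤ P - 1 →
      vup p = s p * (vdown p + 1) + (1 - s p) * (vup (p + 1) + 1))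
    (hrec_down : ∀ p, 2 ≤ p → p ≤ P →
      vdown p = s (p - 1) * (vup p + 1) + (1 - s (p - 1)) * (vdown (p - 1) + 1))
    (hbd : vup P = vdown P + 1) :
    let b : ℕ → ℝ := fun p => (1 - s (p - 1)) * (vup p - vdown (p - 1))
    (∀ p, 2 ≤ p → p ≤ P - 1 → b (p + 1) - b p = -2) ∧
      b P = 2 ∧
      (∀ p, 2 ≤ p → p ≤ P → b p = 2 * ((P : ℝ) - p + 1)) := by
  intro b
  have key : ∀ p, 2 ≤ p → p ≤ P → b p = vup p - vdown p + 1 := by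
    intro p h2 hp
    show (1 - s (p - 1)) * (vup p - vdown (p - 1)) = vup p - vdown p + 1
    linear_combination hrec_down p h2 hp
  have hdiff : ∀ p, 2 ≤ p → p ≤ P - 1 → b (p + 1) - b p = -2 := by
    intro p h2 hp
    have hp1 : p + 1 ≤ P := by omega
    have hd := hrec_down (p + 1) (by omega) hp1
    simp only [Nat.add_sub_cancel] at hd
    have hu := hrec_up p (by omega) hp
    rw [key p h2 (by omega), key (p + 1) (by omega) hp1]
    linear_combination - hu - hd
  have hbP : b P = 2 := by
    rw [key P hP le_rfl, hbd]; ring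
  refine ⟨hdiff, hbP, ?_⟩
  have main : ∀ n p, 2 ≤ p → p ≤ P → P - p = n → b p = 2 * ((P : ℝ) - p + 1) := by
    intro n
    induction n with
    | zero =>
      intro p h2 hp hn
      have : p = P := by omega
      subst this
      rw [hbP]; ring
    | succ n ih =>
      intro p h2 hp hn
      have h1 := hdiff p h2 (by omega)
      have h2' := ih (p + 1) (by omega) (by omega) (by omega)
      push_cast at h2' ⊢
      linarith
  exact fun p h2 hp => main (P - p) p h2 hp rfl
end

section
/- For every x ∈ (0,1), (1 − x)² + x·(1 − x + log x) > 0. -/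
/-- Positivity of `g_P(x) = (1-x)^2 + (P-1) x (1 - x + log x)` in the case `P = 2`. -/
theorem gP_pos_of_two_chains :
    ∀ x ∈ Set.Ioo (0 : ℝ) 1, (1 - x) ^ 2 + x * (1 - x + Real.log x) > 0 := by
  rintro x ⟨hx0, hx1⟩
  have hne : (1:ℝ)/x ≠ 1 := by
    intro h
    have : x = 1 := by field_simp at h; linarith
    linarith
  have h := Real.log_lt_sub_one_of_pos (by positivity : (0:ℝ) < 1/x) hne
  rw [Real.log_div one_ne_zero (ne_of_gt hx0), Real.log_one] at h
  -- h : 0 - log x < 1/x - 1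
  have hlog : Real.log x > 1 - 1/x := by linarith
  have hx : x * Real.log x > x * (1 - 1/x) := by
    exact (mul_lt_mul_iff_right₀ hx0).mpr hlog
  have : x * (1 - 1/x) = x - 1 := by field_simp
  nlinarith
end

section
/- Let P > 3 be an integer and define g(x) = (1 − x)² + (P − 1)·x·(1 − x + log x) for x ∈ (0,1), with derivative g′(x) = (4 − 2P)(x − 1) + (P − 1)·log x and second derivative g″(x) = 4 − 2P + (P − 1)/x. Let x_m = (P − 1)/(2(P − 2)). Then g″(x) > 0 for x ∈ (0, x_m), g″(x) < 0 for x ∈ (x_m, 1), g′(x_m) > 0, and there exists a unique x₀ ∈ (0, x_m) such that g′(x) < 0 for all x ∈ (0, x₀) and g′(x) > 0 for all x ∈ (x₀, 1). -/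
/-!
Writing `c = x_m`, one has `P - 1 = 2(P - 2) c`, hence `g'(x) = 2(P - 2) (1 - x + c log x)`.
The function `h(x) = 1 - x + c log x` has derivative `c / x - 1`, so it increases on `(0, c]`
and decreases on `[c, ∞)`. Since `h(1) = 0`, `h(c) > 0` (from `log c > 1 - 1/c`, as `c ≠ 1`) and
`h(exp (-1/c)) = -exp (-1/c) < 0`, `h` has exactly one zero `x₀` in `(0, c)`, is negative before it
and positive on `(x₀, 1)`.
-/

open Real Set

theorem existsUnique_sign_change_of_strictMonoOn_of_strictAntiOn {f : ℝ → ℝ} {a m b z : ℝ}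
    (hmono : StrictMonoOn f (Ioc a m)) (hanti : StrictAntiOn f (Icc m b)) (hmb : m ≤ b)
    (hz : z ∈ Ioo a m) (hfz : f z = 0) (hfb : f b = 0) :
    ∃! x₀, x₀ ∈ Ioo a m ∧ (∀ x ∈ Ioo a x₀, f x < 0) ∧ ∀ x ∈ Ioo x₀ b, 0 < f x := by
  have hzm : z ∈ Ioc a m := Ioo_subset_Ioc_self hz
  have hneg : ∀ x ∈ Ioo a z, f x < 0 := fun x hx =>
    hfz ▸ hmono ⟨hx.1, hx.2.le.trans hz.2.le⟩ hzm hx.2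
  have hpos : ∀ x ∈ Ioo z b, 0 < f x := by
    intro x hx
    rcases le_or_gt x m with hxm | hmx
    · exact hfz ▸ hmono hzm ⟨hz.1.trans hx.1, hxm⟩ hx.1
    · exact hfb ▸ hanti ⟨hmx.le, hx.2.le⟩ ⟨hmb, le_rfl⟩ hx.2
  refine ⟨z, ⟨hz, hneg, hpos⟩, fun y ⟨hy, hyneg, hypos⟩ => ?_⟩
  rcases lt_trichotomy y z with hyz | rfl | hzy
  · exact absurd hfz (hypos z ⟨hyz, hz.2.trans_le hmb⟩).ne'
  · rfl
  · exact absurd hfz (hyneg z ⟨hz.1, hzy⟩).ne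

namespace DEO

noncomputable def logAffine (c x : ℝ) : ℝ := 1 - x + c * log x

variable {c x : ℝ}

theorem hasDerivAt_logAffine (c : ℝ) (hx : 0 < x) : HasDerivAt (logAffine c) (c / x - 1) x := by
  refine (((hasDerivAt_id' x).const_sub 1).add
    ((hasDerivAt_log hx.ne').const_mul c)).congr_deriv ?_
  rw [div_eq_mul_inv]; ring

theorem continuousOn_logAffine (c : ℝ) : ContinuousOn (logAffine c) (Ioi 0) := fun _ hx =>
  (hasDerivAt_logAffine c hx).continuousAt.continuousWithinAt

theorem strictMonoOn_logAffine (c : ℝ) : StrictMonoOn (logAffine c) (Ioc 0 c) := by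
  refine strictMonoOn_of_deriv_pos (convex_Ioc 0 c)
    ((continuousOn_logAffine c).mono Ioc_subset_Ioi_self) fun x hx => ?_
  rw [interior_Ioc] at hx
  rw [(hasDerivAt_logAffine c hx.1).deriv, sub_pos, one_lt_div hx.1]
  exact hx.2

theorem strictAntiOn_logAffine (hc : 0 < c) : StrictAntiOn (logAffine c) (Ici c) := by
  refine strictAntiOn_of_deriv_neg (convex_Ici c)
    ((continuousOn_logAffine c).mono fun x hx => hc.trans_le hx) fun x hx => ?_
  rw [interior_Ici] at hx
  have hx0 : 0 < x := hc.trans hx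
  rw [(hasDerivAt_logAffine c hx0).deriv, sub_neg, div_lt_one hx0]
  exact hx

theorem logAffine_one (c : ℝ) : logAffine c 1 = 0 := by simp [logAffine]

theorem logAffine_self_pos (hc : 0 < c) (hc1 : c ≠ 1) : 0 < logAffine c c := by
  have h := log_lt_sub_one_of_pos (inv_pos.2 hc) (inv_ne_one.2 hc1)
  rw [log_inv, inv_eq_one_div, lt_sub_iff_add_lt, lt_div_iff₀ hc] at h
  unfold logAffine
  linarith

theorem logAffine_exp_neg_inv_neg (hc : 0 < c) : logAffine c (exp (-c⁻¹)) < 0 := by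
  rw [logAffine, log_exp, mul_neg, mul_inv_cancel₀ hc.ne']
  linarith [exp_pos (-c⁻¹)]

theorem exp_neg_inv_lt_self (hc : 0 < c) : exp (-c⁻¹) < c := by
  rw [exp_neg, inv_lt_comm₀ (exp_pos _) hc]
  linarith [add_one_lt_exp (inv_pos.2 hc).ne']

theorem exists_mem_Ioo_logAffine_eq_zero (hc : 0 < c) (hc1 : c ≠ 1) :
    ∃ z ∈ Ioo 0 c, logAffine c z = 0 := by
  have hlt := exp_neg_inv_lt_self hc
  obtain ⟨z, hz, hfz⟩ := intermediate_value_Ioo hlt.le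
    ((continuousOn_logAffine c).mono fun x hx => (exp_pos _).trans_le hx.1)
    ⟨logAffine_exp_neg_inv_neg hc, logAffine_self_pos hc hc1⟩
  exact ⟨z, ⟨(exp_pos _).trans hz.1, hz.2⟩, hfz⟩

theorem existsUnique_logAffine_sign_change (hc : 0 < c) (hc1 : c < 1) :
    ∃! x₀, x₀ ∈ Ioo 0 c ∧ (∀ x ∈ Ioo 0 x₀, logAffine c x < 0) ∧
      ∀ x ∈ Ioo x₀ 1, 0 < logAffine c x := by
  obtain ⟨z, hz, hfz⟩ := exists_mem_Ioo_logAffine_eq_zero hc hc1.ne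
  exact existsUnique_sign_change_of_strictMonoOn_of_strictAntiOn (strictMonoOn_logAffine c)
    ((strictAntiOn_logAffine hc).mono Icc_subset_Ici_self) hc1.le hz hfz (logAffine_one c)

noncomputable def g (p x : ℝ) : ℝ := (1 - x) ^ 2 + (p - 1) * x * (1 - x + log x)

noncomputable def g' (p x : ℝ) : ℝ := (4 - 2 * p) * (x - 1) + (p - 1) * log x

noncomputable def g'' (p x : ℝ) : ℝ := 4 - 2 * p + (p - 1) / x

noncomputable def xm (p : ℝ) : ℝ := (p - 1) / (2 * (p - 2))

variable {p : ℝ}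

theorem hasDerivAt_g (p : ℝ) (hx : 0 < x) : HasDerivAt (g p) (g' p x) x := by
  have hsq : HasDerivAt (fun x : ℝ => (1 - x) ^ 2) (2 * (1 - x) ^ 1 * (-1)) x :=
    ((hasDerivAt_id x).const_sub 1).pow 2
  have hprod : HasDerivAt (fun x : ℝ => x * (1 - x + log x))
      (1 * (1 - x + log x) + x * (-1 + x⁻¹)) x :=
    (hasDerivAt_id x).mul (((hasDerivAt_id x).const_sub 1).add (hasDerivAt_log hx.ne'))
  have hprod' := hprod.const_mul (p - 1)
  simp only [← mul_assoc] at hprod'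
  refine (hsq.add hprod').congr_deriv ?_
  rw [g']
  field_simp
  ring

theorem hasDerivAt_g' (p : ℝ) (hx : 0 < x) : HasDerivAt (g' p) (g'' p x) x := by
  refine ((((hasDerivAt_id' x).sub_const 1).const_mul (4 - 2 * p)).add
    ((hasDerivAt_log hx.ne').const_mul (p - 1))).congr_deriv ?_
  simp only [g'']
  ring

theorem mul_xm (hp : p ≠ 2) : 2 * (p - 2) * xm p = p - 1 :=
  mul_div_cancel₀ _ (mul_ne_zero two_ne_zero (sub_ne_zero.2 hp))

theorem xm_pos (hp : 2 < p) : 0 < xm p :=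
  div_pos (by linarith) (by linarith)

theorem xm_lt_one (hp : 3 < p) : xm p < 1 := by
  rw [xm, div_lt_one (by linarith)]
  linarith

theorem g'_eq (hp : p ≠ 2) (x : ℝ) : g' p x = 2 * (p - 2) * logAffine (xm p) x := by
  rw [g', logAffine, mul_add, ← mul_assoc, mul_xm hp]
  ring

theorem g''_eq (hp : p ≠ 2) (x : ℝ) : g'' p x = 2 * (p - 2) * (xm p / x - 1) := by
  rw [g'', mul_sub, ← mul_div_assoc, mul_xm hp]
  ring

theorem g''_pos (hp : 2 < p) (hx : x ∈ Ioo 0 (xm p)) : 0 < g'' p x := by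
  rw [g''_eq hp.ne']
  exact mul_pos (by linarith) (sub_pos.2 ((one_lt_div hx.1).2 hx.2))

theorem g''_neg (hp : 2 < p) (hx : xm p < x) : g'' p x < 0 := by
  have hx0 : 0 < x := (xm_pos hp).trans hx
  rw [g''_eq hp.ne']
  exact mul_neg_of_pos_of_neg (by linarith) (sub_neg.2 ((div_lt_one hx0).2 hx))

theorem g'_xm_pos (hp : 3 < p) : 0 < g' p (xm p) := by
  rw [g'_eq (by linarith)]
  exact mul_pos (by linarith) (logAffine_self_pos (xm_pos (by linarith)) (xm_lt_one hp).ne)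

theorem existsUnique_g'_sign_change (hp : 3 < p) :
    ∃! x₀, x₀ ∈ Ioo 0 (xm p) ∧ (∀ x ∈ Ioo 0 x₀, g' p x < 0) ∧ ∀ x ∈ Ioo x₀ 1, 0 < g' p x := by
  have hp2 : p ≠ 2 := by linarith
  have hk : 0 < 2 * (p - 2) := by linarith
  have hneg (x : ℝ) : g' p x < 0 ↔ logAffine (xm p) x < 0 := by
    rw [g'_eq hp2, ← smul_eq_mul, smul_neg_iff_of_pos_left hk]
  have hpos (x : ℝ) : 0 < g' p x ↔ 0 < logAffine (xm p) x := by
    rw [g'_eq hp2, ← smul_eq_mul, smul_pos_iff_of_pos_left hk]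
  simpa only [hneg, hpos] using
    existsUnique_logAffine_sign_change (xm_pos (by linarith)) (xm_lt_one hp)

end DEO

/-- Supporting derivative analysis for Lemma 3 of the paper: for `P > 3`, the
function `g(x) = (1-x)^2 + (P-1) x (1 - x + log x)` has derivative
`g'(x) = (4-2P)(x-1) + (P-1) log x` and second derivative
`g''(x) = 4 - 2P + (P-1)/x`; `g''` is positive before `x_m = (P-1)/(2(P-2))` and
negative after, `g'(x_m) > 0`, and `g'` has a unique sign change at some
`x₀ ∈ (0, x_m)`. -/
theorem deo_g_deriv_analysis (P : ℕ) (hP : 3 < P) :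
    let g : ℝ → ℝ := fun x => (1 - x) ^ 2 + ((P : ℝ) - 1) * x * (1 - x + Real.log x)
    let g' : ℝ → ℝ := fun x => (4 - 2 * (P : ℝ)) * (x - 1) + ((P : ℝ) - 1) * Real.log x
    let g'' : ℝ → ℝ := fun x => 4 - 2 * (P : ℝ) + ((P : ℝ) - 1) / x
    let xm : ℝ := ((P : ℝ) - 1) / (2 * ((P : ℝ) - 2))
    (∀ x ∈ Set.Ioo (0 : ℝ) 1, HasDerivAt g (g' x) x) ∧
      (∀ x ∈ Set.Ioo (0 : ℝ) 1, HasDerivAt g' (g'' x) x) ∧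
      (∀ x ∈ Set.Ioo (0 : ℝ) xm, g'' x > 0) ∧
      (∀ x ∈ Set.Ioo xm (1 : ℝ), g'' x < 0) ∧
      g' xm > 0 ∧
      (∃! x₀, x₀ ∈ Set.Ioo (0 : ℝ) xm ∧
        (∀ x ∈ Set.Ioo (0 : ℝ) x₀, g' x < 0) ∧
        (∀ x ∈ Set.Ioo x₀ (1 : ℝ), g' x > 0)) := by
  intro g g' g'' xm
  have hp : (3 : ℝ) < P := by exact_mod_cast hP
  exact ⟨fun x hx => DEO.hasDerivAt_g P hx.1, fun x hx => DEO.hasDerivAt_g' P hx.1,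
    fun x hx => DEO.g''_pos (by linarith) hx,
    fun x hx => DEO.g''_neg (by linarith) hx.1,
    DEO.g'_xm_pos hp, DEO.existsUnique_g'_sign_change hp⟩
end

section
/- Let P > 3 be an integer and r ∈ (0,1), and define f(W) = 2WP + 2WP(P−1)·r^W/(1 − r^W) for real W > 0, where r^W = exp(W·log r). Let x* ∈ (0,1) be the unique point such that g(x) = (1 − x)² + (P − 1)·x·(1 − x + log x) satisfies g(x) > 0 on (0, x*) and g(x) < 0 on (x*, 1), and set W* = log(x*)/log(r). Then f attains its global minimum on (0, ∞) at W*, i.e., f(W) ≥ f(W*) for all W > 0, with equality only at W = W*. -/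
/-! Substituting `x = r ^ W` maps `(0, ∞)` onto `(0, 1)` bijectively and turns the round trip
time into `f W = (2P / log r) · log x · (1 + (P - 1) x / (1 - x))`. The derivative of the second
factor is `g x / (x (1 - x)²)`, so the sign pattern of `g` makes it strictly maximal at `x*`;
as `2P / log r < 0`, `f` is strictly minimal at the corresponding `W*`. -/

open Set Real

theorem apply_lt_apply_of_hasDerivAt_sign_change {f f' : ℝ → ℝ} {a b c : ℝ} (hc : c ∈ Ioo a b)
    (hf : ∀ y ∈ Ioo a b, HasDerivAt f (f' y) y) (hpos : ∀ y ∈ Ioo a c, 0 < f' y)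
    (hneg : ∀ y ∈ Ioo c b, f' y < 0) {x : ℝ} (hx : x ∈ Ioo a b) (hxc : x ≠ c) : f x < f c := by
  have hcont : ContinuousOn f (Ioo a b) := fun y hy => (hf y hy).continuousAt.continuousWithinAt
  rcases hxc.lt_or_gt with hlt | hgt
  · have hmono : StrictMonoOn f (Ioc a c) := by
      refine strictMonoOn_of_hasDerivWithinAt_pos (f' := f') (convex_Ioc a c)
        (hcont.mono fun y hy => ⟨hy.1, hy.2.trans_lt hc.2⟩) (fun y hy => ?_) (fun y hy => ?_)
      all_goals rw [interior_Ioc] at hy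
      · exact (hf y ⟨hy.1, hy.2.trans hc.2⟩).hasDerivWithinAt
      · exact hpos y hy
    exact hmono ⟨hx.1, hlt.le⟩ ⟨hc.1, le_rfl⟩ hlt
  · have hanti : StrictAntiOn f (Ico c b) := by
      refine strictAntiOn_of_hasDerivWithinAt_neg (f' := f') (convex_Ico c b)
        (hcont.mono fun y hy => ⟨hc.1.trans_le hy.1, hy.2⟩) (fun y hy => ?_) (fun y hy => ?_)
      all_goals rw [interior_Ico] at hy
      · exact (hf y ⟨hc.1.trans hy.1, hy.2⟩).hasDerivWithinAt
      · exact hneg y hy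
    exact hanti ⟨le_rfl, hc.2⟩ ⟨hgt.le, hx.2⟩ hgt

/-- The round trip time as a function of `x = r ^ W`, up to the factor `2P / log r`,
with `c = P - 1`. -/
noncomputable def deoProfile (c x : ℝ) : ℝ := log x * (1 + c * x / (1 - x))

theorem hasDerivAt_deoProfile (c : ℝ) {x : ℝ} (hx : x ∈ Ioo (0 : ℝ) 1) :
    HasDerivAt (deoProfile c)
      (((1 - x) ^ 2 + c * x * (1 - x + log x)) / (x * (1 - x) ^ 2)) x := by
  have hx0 : x ≠ 0 := hx.1.ne'
  have hx1 : 1 - x ≠ 0 := sub_ne_zero.2 hx.2.ne'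
  have hquot : HasDerivAt (fun z => 1 + c * z / (1 - z)) ((c * (1 - x) + c * x) / (1 - x) ^ 2) x := by
    simpa using (((hasDerivAt_id x).const_mul c).div ((hasDerivAt_id x).const_sub 1) hx1).const_add 1
  refine ((hasDerivAt_log hx0).mul hquot).congr_deriv ?_
  field_simp
  ring

theorem deoProfile_lt_of_ne (c : ℝ) {xstar : ℝ} (hxstar : xstar ∈ Ioo (0 : ℝ) 1)
    (hpos : ∀ x ∈ Ioo (0 : ℝ) xstar, (1 - x) ^ 2 + c * x * (1 - x + log x) > 0)
    (hneg : ∀ x ∈ Ioo xstar (1 : ℝ), (1 - x) ^ 2 + c * x * (1 - x + log x) < 0)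
    {x : ℝ} (hx : x ∈ Ioo (0 : ℝ) 1) (hne : x ≠ xstar) :
    deoProfile c x < deoProfile c xstar := by
  have hden : ∀ y ∈ Ioo (0 : ℝ) 1, 0 < y * (1 - y) ^ 2 := fun y hy =>
    mul_pos hy.1 (pow_pos (sub_pos.2 hy.2) 2)
  refine apply_lt_apply_of_hasDerivAt_sign_change hxstar (fun y hy => hasDerivAt_deoProfile c hy)
    (fun y hy => ?_) (fun y hy => ?_) hx hne
  · exact div_pos (hpos y hy) (hden y ⟨hy.1, hy.2.trans hxstar.2⟩)
  · exact div_neg_of_neg_of_pos (hneg y hy) (hden y ⟨hxstar.1.trans hy.1, hy.2⟩)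

theorem round_trip_eq_mul_deoProfile (p : ℝ) {L : ℝ} (hL : L ≠ 0) (W : ℝ) :
    2 * W * p + 2 * W * p * (p - 1) * exp (W * L) / (1 - exp (W * L)) =
      2 * p / L * deoProfile (p - 1) (exp (W * L)) := by
  rw [deoProfile, log_exp]
  by_cases h : 1 - exp (W * L) = 0
  · simp only [h, div_zero, add_zero, mul_one]
    field_simp
  · field_simp

/-- Part of Theorem 1 of the paper: for `P > 3` chains and equi-rejection
rate `r`, the expected round trip time `f(W) = 2WP + 2WP(P-1) r^W / (1 - r^W)`
(with `r^W = exp (W log r)`) attains its global minimum over `W > 0` at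
`W* = log(x*) / log(r)`, where `x*` is the unique sign-change point of
`g(x) = (1-x)^2 + (P-1) x (1 - x + log x)` on `(0,1)`. -/
theorem deo_optimal_window (P : ℕ) (hP : 3 < P) (r : ℝ) (hr : r ∈ Set.Ioo (0 : ℝ) 1)
    (xstar : ℝ) (hxstar : xstar ∈ Set.Ioo (0 : ℝ) 1)
    (hpos : ∀ x ∈ Set.Ioo (0 : ℝ) xstar,
      (1 - x) ^ 2 + ((P : ℝ) - 1) * x * (1 - x + Real.log x) > 0)
    (hneg : ∀ x ∈ Set.Ioo xstar (1 : ℝ),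
      (1 - x) ^ 2 + ((P : ℝ) - 1) * x * (1 - x + Real.log x) < 0) :
    let f : ℝ → ℝ := fun W => 2 * W * P +
      2 * W * P * ((P : ℝ) - 1) * Real.exp (W * Real.log r) /
        (1 - Real.exp (W * Real.log r))
    let Wstar : ℝ := Real.log xstar / Real.log r
    ∀ W : ℝ, 0 < W → f Wstar ≤ f W ∧ (f W = f Wstar → W = Wstar) := by
  intro f Wstar W hW
  have hL : log r < 0 := log_neg hr.1 hr.2
  have hscale : 2 * (P : ℝ) / log r < 0 :=
    div_neg_of_pos_of_neg (by positivity) hL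
  have hxW : exp (W * log r) ∈ Ioo (0 : ℝ) 1 :=
    ⟨exp_pos _, exp_lt_one_iff.2 (mul_neg_of_pos_of_neg hW hL)⟩
  have hxWstar : exp (Wstar * log r) = xstar := by
    rw [div_mul_cancel₀ _ hL.ne, exp_log hxstar.1]
  rcases eq_or_ne W Wstar with rfl | hne
  · exact ⟨le_rfl, fun _ => rfl⟩
  have hxne : exp (W * log r) ≠ xstar := by
    rw [← hxWstar, Ne, exp_eq_exp, mul_left_inj' hL.ne]
    exact hne
  have hlt : f Wstar < f W := by
    simp only [f, round_trip_eq_mul_deoProfile _ hL.ne, hxWstar]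
    exact mul_lt_mul_of_neg_left (deoProfile_lt_of_ne _ hxstar hpos hneg hxW hxne) hscale
  exact ⟨hlt.le, fun heq => absurd heq hlt.ne'⟩
end

section
/- Define g_P(x) = (1 − x)² + (P − 1)·x·(1 − x + log x). Then there exist constants C > 0 and P₀ ≥ 4 such that for all real P ≥ P₀, |log(P) · g_P(1/(P·log P)) + log(log P)| ≤ C. In particular, g_P(1/(P·log P)) → 0 as P → ∞. -/
/-!
At `x = 1 / (P L)` with `L = log P` one has `log x = -(L + log L)` and `L x = 1 / P`, so that
`L g_P(x) + log L = (L + log L - 2 + x) / P + (P - 1)(1 - x) / P`, which lies in `[-1, 3]` once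
`L ≥ 1`. Dividing by `L` gives `|g_P(x)| ≤ (3 + log L) / L`, and `log L / L → 0`.
-/

open Real Filter Topology

noncomputable def deoG (P x : ℝ) : ℝ := (1 - x) ^ 2 + (P - 1) * x * (1 - x + log x)

lemma log_mul_deoG_add_log_log {P : ℝ} (hP : 0 < P) (hL : 0 < log P) :
    log P * deoG P (1 / (P * log P)) + log (log P) =
      (log P + log (log P) - 2 + 1 / (P * log P)) / P
        + (P - 1) * (1 - 1 / (P * log P)) / P := by
  have hlog : log (1 / (P * log P)) = -(log P + log (log P)) := by
    rw [one_div, log_inv, log_mul hP.ne' hL.ne']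
  rw [deoG, hlog]
  field_simp
  ring

lemma one_le_log_of_exp_one_le {P : ℝ} (hP : exp 1 ≤ P) : 1 ≤ log P := by
  rwa [le_log_iff_exp_le ((exp_pos 1).trans_le hP)]

lemma abs_log_mul_deoG_add_log_log_le {P : ℝ} (hP : exp 1 ≤ P) :
    |log P * deoG P (1 / (P * log P)) + log (log P)| ≤ 3 := by
  have hP0 : 0 < P := (exp_pos 1).trans_le hP
  have hL1 : 1 ≤ log P := one_le_log_of_exp_one_le hP
  set L := log P
  have hLP : L ≤ P - 1 := log_le_sub_one_of_pos hP0
  have hM0 : 0 ≤ log L := log_nonneg hL1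
  have hML : log L ≤ L - 1 := log_le_sub_one_of_pos (by linarith)
  have hx0 : 0 < 1 / (P * L) := by positivity
  have hx1 : 1 / (P * L) ≤ 1 := by
    rw [div_le_one (by positivity)]; nlinarith
  rw [log_mul_deoG_add_log_log hP0 (by linarith), ← add_div, abs_le, le_div_iff₀ hP0,
    div_le_iff₀ hP0]
  constructor <;> nlinarith

lemma abs_deoG_le {P : ℝ} (hP : exp 1 ≤ P) :
    |deoG P (1 / (P * log P))| ≤ (3 + log (log P)) / log P := by
  have hL1 : 1 ≤ log P := one_le_log_of_exp_one_le hP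
  have hL : 0 < log P := one_pos.trans_le hL1
  have hM0 : 0 ≤ log (log P) := log_nonneg hL1
  rw [le_div_iff₀ hL, ← abs_of_pos hL, ← abs_mul, abs_of_pos hL, mul_comm]
  obtain ⟨hlo, hhi⟩ := abs_le.mp (abs_log_mul_deoG_add_log_log_le hP)
  exact abs_le.mpr ⟨by linarith, by linarith⟩

lemma tendsto_const_add_log_log_div_log (c : ℝ) :
    Tendsto (fun P : ℝ => (c + log (log P)) / log P) atTop (𝓝 0) := by
  have hc : Tendsto (fun P : ℝ => c / log P) atTop (𝓝 0) :=
    tendsto_const_nhds.div_atTop tendsto_log_atTop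
  have hM : Tendsto (fun P : ℝ => log (log P) / log P) atTop (𝓝 0) :=
    isLittleO_log_id_atTop.tendsto_div_nhds_zero.comp tendsto_log_atTop
  simpa [add_div] using hc.add hM

/-- Asymptotic approximation step in the proof of Theorem 1 of the paper:
`g_P(1/(P log P)) = -log(log P)/log P + O(1/log P)`, so in particular
`g_P(1/(P log P)) → 0` as `P → ∞`, where
`g_P(x) = (1-x)^2 + (P-1) x (1 - x + log x)`. -/
theorem deo_g_asymptotic_root :
    let gP : ℝ → ℝ → ℝ :=
      fun P x => (1 - x) ^ 2 + (P - 1) * x * (1 - x + Real.log x)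
    (∃ C > (0 : ℝ), ∃ P₀ ≥ (4 : ℝ), ∀ P : ℝ, P ≥ P₀ →
      |Real.log P * gP P (1 / (P * Real.log P)) + Real.log (Real.log P)| ≤ C) ∧
    Filter.Tendsto (fun P : ℝ => gP P (1 / (P * Real.log P)))
      Filter.atTop (nhds 0) := by
  intro gP
  have hexp : exp 1 ≤ 4 := (exp_one_lt_d9.trans (by norm_num)).le
  refine ⟨⟨3, by norm_num, 4, le_rfl, fun P hP =>
    abs_log_mul_deoG_add_log_log_le (hexp.trans hP)⟩, ?_⟩
  exact squeeze_zero_norm' ((eventually_ge_atTop (exp 1)).mono fun P hP => abs_deoG_le hP)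
    (tendsto_const_add_log_log_div_log 3)
end

section
/- Let P ≥ 4 be a real number and r ∈ (0,1). Set x = 1/(P·log P) and W = (log P + log(log P))/(−log r), so that r^W = x. Then 2WP·(1 + (P − 1)·x/(1 − x)) < (4/(−log r))·(P·log P + P·log(log P)). -/
/-- Quantitative round trip time bound in the proof of Theorem 1 of the paper:
with `x = 1/(P log P)` and window size `W = (log P + log log P)/(-log r)` one has
`r^W = x` and the expected round trip time `2WP (1 + (P-1) x/(1-x))` is less than
`(4/(-log r)) (P log P + P log log P)`. -/
theorem deo_round_trip_time_bound (P : ℝ) (hP : 4 ≤ P) (r : ℝ)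
    (hr : r ∈ Set.Ioo (0 : ℝ) 1) :
    let x : ℝ := 1 / (P * Real.log P)
    let W : ℝ := (Real.log P + Real.log (Real.log P)) / (-Real.log r)
    Real.exp (W * Real.log r) = x ∧
      2 * W * P * (1 + (P - 1) * x / (1 - x)) <
        4 / (-Real.log r) * (P * Real.log P + P * Real.log (Real.log P)) := by
  intro x W
  have hP0 : (0 : ℝ) < P := by linarith
  have hlogr : Real.log r < 0 := Real.log_neg hr.1 hr.2
  have hL : 0 < -Real.log r := by linarith
  have hlr0 : Real.log r ≠ 0 := ne_of_lt hlogr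
  have he1 : Real.exp 1 < P := lt_of_lt_of_le (by
    have := Real.exp_one_lt_d9; linarith) hP
  have hlogP : 1 < Real.log P := (Real.lt_log_iff_exp_lt hP0).2 he1
  have hlogP0 : 0 < Real.log P := by linarith
  have hPlogP : 1 < P * Real.log P := by nlinarith
  have hx1 : x < 1 := by
    simp only [x]
    rw [div_lt_one (by linarith)]; linarith
  have hx0 : 0 < x := by positivity
  constructor
  · have hW : W * Real.log r = -(Real.log P + Real.log (Real.log P)) := by
      simp only [W]
      field_simp
    rw [hW, Real.exp_neg, Real.exp_add, Real.exp_log hP0, Real.exp_log hlogP0]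
    simp [x, one_div]
  · have hRHS : 4 / (-Real.log r) * (P * Real.log P + P * Real.log (Real.log P))
        = 4 * W * P := by
      simp only [W]; field_simp
    rw [hRHS]
    have ht : (P - 1) * x / (1 - x) < 1 := by
      rw [div_lt_one (by linarith)]
      have hPx : P * x < 1 := by
        simp only [x]
        rw [mul_one_div, div_lt_one (by linarith)]
        nlinarith
      nlinarith
    have hWP : 0 < W * P := by
      have hllP : 0 < Real.log (Real.log P) := Real.log_pos hlogP
      have : 0 < W := by positivity
      positivity
    nlinarith
end
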